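/- Define, for p ∈ ℝ³, unit ω ∈ ℝ³ and indices i,j ∈ {1,2,3}, H_S^E(ω,p)_{ij} = −(δ_{ij} − p̂_i p̂_j)/(p₀(1 + p̂·ω)) + (ω_i + p̂_i)(ω_j − (ω·p̂) p̂_j)/(p₀(1 + p̂·ω)²) and H_S^B(ω,p)_{ij} = −ω_k ε_{ikj}/(p₀(1 + p̂·ω)) + (ω × p̂)_i p̂_j/(p₀(1 + p̂·ω)) − (ω × p̂)_i (ω_j − (ω·p̂) p̂_j)/(p₀(1 + p̂·ω)²), where ε is the Levi–Civita symbol and repeated indices are summed. Then there is an absolute constant C such that for all p, all unit ω and all i,j: |H_S^E(ω,p)_{ij}| ≤ C/(p₀(1 + p̂·ω)) and |H_S^B(ω,p)_{ij}| ≤ C/(p₀(1 + p̂·ω)). -/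

import Mathlib

/-!
Write `s = 1 + p̂·ω > 0`. The terms of both kernels over `p₀ s` have bounded numerators. The
numerators over `p₀ s²` are products of components of `ω + p̂`, `ω − (ω·p̂) p̂` and `ω × p̂`,
each of squared length at most `2 s`: for instance `|ω + p̂|² = 1 + 2 ω·p̂ + |p̂|² ≤ 2 s`, and
`|ω × p̂|² = |p̂|² − (ω·p̂)² ≤ (1 − ω·p̂)(1 + ω·p̂)`. Hence those terms are also `O(1 / (p₀ s))`.
-/

noncomputable section

open Real MeasureTheory
open scoped RealInnerProductSpace

/-- The momentum space `ℝ³`. -/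
abbrev E3 : Type := EuclideanSpace ℝ (Fin 3)

/-- `p₀ = √(1 + |p|²)`. -/
def p0 (p : E3) : ℝ := Real.sqrt (1 + ‖p‖ ^ 2)

/-- `p̂ = p / p₀`. -/
def phat (p : E3) : E3 := (p0 p)⁻¹ • p

/-- The cross product in `ℝ³`. -/
def cross3 (a b : E3) : E3 :=
  (WithLp.equiv 2 (Fin 3 → ℝ)).symm
    ![a 1 * b 2 - a 2 * b 1, a 2 * b 0 - a 0 * b 2, a 0 * b 1 - a 1 * b 0]

/-- The Kronecker delta `δ_{ij}`. -/
def kron (i j : Fin 3) : ℝ := if i = j then 1 else 0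

/-- The Levi-Civita symbol `ε_{ijk}` on `{0,1,2}`. -/
def levi (i j k : Fin 3) : ℝ :=
  (((j : ℝ) - (i : ℝ)) * ((k : ℝ) - (i : ℝ)) * ((k : ℝ) - (j : ℝ))) / 2

/-- The Glassey–Strauss kernel
`H_S^E(ω,p)_{ij} = −(δ_{ij} − p̂_i p̂_j)/(p₀(1 + p̂·ω)) + (ω_i + p̂_i)(ω_j − (ω·p̂) p̂_j)/(p₀(1 + p̂·ω)²)`. -/
def HSE (ω p : E3) (i j : Fin 3) : ℝ :=
  -((kron i j - phat p i * phat p j) / (p0 p * (1 + ⟪phat p, ω⟫)))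
    + (ω i + phat p i) * (ω j - ⟪ω, phat p⟫ * phat p j) / (p0 p * (1 + ⟪phat p, ω⟫) ^ 2)

/-- The Glassey–Strauss kernel `H_S^B(ω,p)_{ij} = −ω_k ε_{ikj}/(p₀(1 + p̂·ω))
` `+ (ω × p̂)_i p̂_j/(p₀(1 + p̂·ω)) − (ω × p̂)_i (ω_j − (ω·p̂) p̂_j)/(p₀(1 + p̂·ω)²)`,
with the repeated index `k` summed. -/
def HSB (ω p : E3) (i j : Fin 3) : ℝ :=
  -((∑ k : Fin 3, ω k * levi i k j) / (p0 p * (1 + ⟪phat p, ω⟫)))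
    + cross3 ω (phat p) i * phat p j / (p0 p * (1 + ⟪phat p, ω⟫))
    - cross3 ω (phat p) i * (ω j - ⟪ω, phat p⟫ * phat p j) / (p0 p * (1 + ⟪phat p, ω⟫) ^ 2)

open Matrix in
lemma norm_cross3_sq (a b : E3) : ‖cross3 a b‖ ^ 2 = ‖a‖ ^ 2 * ‖b‖ ^ 2 - ⟪a, b⟫ ^ 2 := by
  have h : cross3 a b = WithLp.toLp 2 (a.ofLp ⨯₃ b.ofLp) := rfl
  simp only [← real_inner_self_eq_norm_sq, h, EuclideanSpace.inner_eq_star_dotProduct,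
    star_trivial, cross_dot_cross, dotProduct_comm b.ofLp a.ofLp]
  ring

section UnitVector

variable {F : Type*} [NormedAddCommGroup F] [InnerProductSpace ℝ F] {ω q : F}

lemma abs_inner_le_one (hω : ‖ω‖ = 1) (hq : ‖q‖ ≤ 1) : |⟪q, ω⟫| ≤ 1 :=
  (abs_real_inner_le_norm q ω).trans (by rw [hω, mul_one]; exact hq)

lemma one_add_inner_pos (hω : ‖ω‖ = 1) (hq : ‖q‖ < 1) : 0 < 1 + ⟪q, ω⟫ := by
  have := (abs_real_inner_le_norm q ω).trans_lt (by rwa [hω, mul_one])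
  linarith [neg_abs_le ⟪q, ω⟫]

lemma norm_add_sq_le (hω : ‖ω‖ = 1) (hq : ‖q‖ ≤ 1) : ‖ω + q‖ ^ 2 ≤ 2 * (1 + ⟪q, ω⟫) := by
  rw [norm_add_sq_real, hω, real_inner_comm]
  nlinarith [norm_nonneg q]

lemma one_sub_inner_sq_le (hω : ‖ω‖ = 1) (hq : ‖q‖ ≤ 1) : 1 - ⟪q, ω⟫ ^ 2 ≤ 2 * (1 + ⟪q, ω⟫) := by
  have := abs_le.mp (abs_inner_le_one hω hq)
  nlinarith

lemma norm_sub_inner_smul_sq_le (hω : ‖ω‖ = 1) (hq : ‖q‖ ≤ 1) :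
    ‖ω - ⟪ω, q⟫ • q‖ ^ 2 ≤ 2 * (1 + ⟪q, ω⟫) := by
  refine le_trans ?_ (one_sub_inner_sq_le hω hq)
  rw [norm_sub_sq_real, real_inner_smul_right, norm_smul, Real.norm_eq_abs, mul_pow, sq_abs, hω,
    real_inner_comm ω q]
  nlinarith [sq_nonneg ⟪q, ω⟫, pow_le_one₀ (norm_nonneg q) hq (n := 2)]

end UnitVector

lemma abs_mul_le_of_sq_le {a b c : ℝ} (ha : a ^ 2 ≤ c) (hb : b ^ 2 ≤ c) : |a * b| ≤ c := by
  rw [abs_le]; constructor <;> nlinarith [sq_nonneg (a + b), sq_nonneg (a - b)]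

lemma abs_div_mul_sq_le {b β d s : ℝ} (hd : 0 < d) (hs : 0 < s) (hb : |b| ≤ β * s) :
    |b / (d * s ^ 2)| ≤ β / (d * s) := by
  rw [abs_div, abs_of_pos (show 0 < d * s ^ 2 by positivity)]
  calc |b| / (d * s ^ 2) ≤ β * s / (d * s ^ 2) := by gcongr
    _ = β / (d * s) := by field_simp

lemma sq_apply_le_norm_sq {ι : Type*} [Fintype ι] (x : EuclideanSpace ℝ ι) (i : ι) :
    x i ^ 2 ≤ ‖x‖ ^ 2 := by
  simpa [sq_abs] using pow_le_pow_left₀ (norm_nonneg _) (PiLp.norm_apply_le x i) 2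

lemma sq_apply_le_one {ι : Type*} [Fintype ι] {x : EuclideanSpace ℝ ι} (hx : ‖x‖ ≤ 1) (i : ι) :
    x i ^ 2 ≤ 1 :=
  (sq_apply_le_norm_sq x i).trans (pow_le_one₀ (norm_nonneg _) hx)

lemma abs_kron_le_one (i j : Fin 3) : |kron i j| ≤ 1 := by
  unfold kron; split_ifs <;> norm_num

lemma abs_levi_le_one (i j k : Fin 3) : |levi i j k| ≤ 1 := by
  fin_cases i <;> fin_cases j <;> fin_cases k <;> norm_num [levi]

lemma abs_sum_mul_levi_le {ω : E3} (hω : ‖ω‖ = 1) (i j : Fin 3) :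
    |∑ k, ω k * levi i k j| ≤ 3 := by
  have hωk (k : Fin 3) : |ω k| ≤ 1 := by simpa [hω] using PiLp.norm_apply_le ω k
  calc |∑ k, ω k * levi i k j| ≤ ∑ k, |ω k * levi i k j| := Finset.abs_sum_le_sum_abs _ _
    _ ≤ ∑ _k : Fin 3, (1 : ℝ) := Finset.sum_le_sum fun k _ => by
      rw [abs_mul]; exact mul_le_one₀ (hωk k) (abs_nonneg _) (abs_levi_le_one i k j)
    _ = 3 := by norm_num

lemma norm_cross3_sq_le {ω q : E3} (hω : ‖ω‖ = 1) (hq : ‖q‖ ≤ 1) :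
    ‖cross3 ω q‖ ^ 2 ≤ 1 - ⟪q, ω⟫ ^ 2 := by
  rw [norm_cross3_sq, hω, real_inner_comm]
  nlinarith [pow_le_one₀ (norm_nonneg q) hq (n := 2)]

lemma one_le_p0 (p : E3) : 1 ≤ p0 p :=
  Real.one_le_sqrt.mpr (by nlinarith [sq_nonneg ‖p‖])

lemma p0_pos (p : E3) : 0 < p0 p :=
  one_pos.trans_le (one_le_p0 p)

lemma norm_phat_lt_one (p : E3) : ‖phat p‖ < 1 := by
  have h0 := p0_pos p
  have hnorm : ‖p‖ < p0 p := Real.lt_sqrt (norm_nonneg p) |>.mpr (by linarith)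
  rw [phat, norm_smul, norm_inv, Real.norm_of_nonneg h0.le, inv_mul_lt_one₀ h0]
  exact hnorm

lemma one_add_inner_phat_pos (p : E3) {ω : E3} (hω : ‖ω‖ = 1) : 0 < 1 + ⟪phat p, ω⟫ :=
  one_add_inner_pos hω (norm_phat_lt_one p)

section Kernels

variable {ω : E3} (p : E3) (hω : ‖ω‖ = 1) (i j : Fin 3)
include hω

lemma abs_HSE_le : |HSE ω p i j| ≤ 4 / (p0 p * (1 + ⟪phat p, ω⟫)) := by
  set q := phat p
  have hq : ‖q‖ ≤ 1 := (norm_phat_lt_one p).le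
  have hd := p0_pos p
  have hs := one_add_inner_phat_pos p hω
  have h_delta : |kron i j - q i * q j| ≤ 1 + 1 :=
    (abs_sub (kron i j) (q i * q j)).trans <| add_le_add (abs_kron_le_one i j)
      (abs_mul_le_of_sq_le (sq_apply_le_one hq i) (sq_apply_le_one hq j))
  have h_prod : |(ω i + q i) * (ω j - ⟪ω, q⟫ * q j)| ≤ 2 * (1 + ⟪q, ω⟫) :=
    abs_mul_le_of_sq_le ((sq_apply_le_norm_sq (ω + q) i).trans (norm_add_sq_le hω hq))
      ((sq_apply_le_norm_sq (ω - ⟪ω, q⟫ • q) j).trans (norm_sub_inner_smul_sq_le hω hq))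
  have hD : 0 < p0 p * (1 + ⟪q, ω⟫) := mul_pos hd hs
  calc |HSE ω p i j|
      ≤ |(kron i j - q i * q j) / (p0 p * (1 + ⟪q, ω⟫))|
        + |(ω i + q i) * (ω j - ⟪ω, q⟫ * q j) / (p0 p * (1 + ⟪q, ω⟫) ^ 2)| :=
        (abs_add_le _ _).trans_eq (by rw [abs_neg])
    _ ≤ 2 / (p0 p * (1 + ⟪q, ω⟫)) + 2 / (p0 p * (1 + ⟪q, ω⟫)) := by
        gcongr
        · rw [abs_div, abs_of_pos hD]; gcongr; linarith
        · exact abs_div_mul_sq_le hd hs h_prod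
    _ = 4 / (p0 p * (1 + ⟪q, ω⟫)) := by ring

lemma abs_HSB_le : |HSB ω p i j| ≤ 6 / (p0 p * (1 + ⟪phat p, ω⟫)) := by
  set q := phat p
  have hq : ‖q‖ ≤ 1 := (norm_phat_lt_one p).le
  have hd := p0_pos p
  have hs := one_add_inner_phat_pos p hω
  have hD : 0 < p0 p * (1 + ⟪q, ω⟫) := mul_pos hd hs
  have h_cross : cross3 ω q i ^ 2 ≤ 1 - ⟪q, ω⟫ ^ 2 :=
    (sq_apply_le_norm_sq _ i).trans (norm_cross3_sq_le hω hq)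
  have h_cross_q : |cross3 ω q i * q j| ≤ 1 :=
    abs_mul_le_of_sq_le (h_cross.trans (by nlinarith)) (sq_apply_le_one hq j)
  have h_prod : |cross3 ω q i * (ω j - ⟪ω, q⟫ * q j)| ≤ 2 * (1 + ⟪q, ω⟫) :=
    abs_mul_le_of_sq_le (h_cross.trans (one_sub_inner_sq_le hω hq))
      ((sq_apply_le_norm_sq (ω - ⟪ω, q⟫ • q) j).trans (norm_sub_inner_smul_sq_le hω hq))
  calc |HSB ω p i j|
      ≤ |(∑ k, ω k * levi i k j) / (p0 p * (1 + ⟪q, ω⟫))|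
        + |cross3 ω q i * q j / (p0 p * (1 + ⟪q, ω⟫))|
        + |cross3 ω q i * (ω j - ⟪ω, q⟫ * q j) / (p0 p * (1 + ⟪q, ω⟫) ^ 2)| := by
        rw [HSB, sub_eq_add_neg, ← abs_neg (_ / (_ * _)), ← abs_neg (_ / (_ * _ ^ 2))]
        exact abs_add_three _ _ _
    _ ≤ 3 / (p0 p * (1 + ⟪q, ω⟫)) + 1 / (p0 p * (1 + ⟪q, ω⟫)) + 2 / (p0 p * (1 + ⟪q, ω⟫)) := by
        gcongr
        · rw [abs_div, abs_of_pos hD]; gcongr; exact abs_sum_mul_levi_le hω i j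
        · rw [abs_div, abs_of_pos hD]; gcongr
        · exact abs_div_mul_sq_le hd hs h_prod
    _ = 6 / (p0 p * (1 + ⟪q, ω⟫)) := by ring

end Kernels

/-- There is an absolute constant `C` such that for all `p`, all unit `ω` and all `i,j`:
`|H_S^E(ω,p)_{ij}| ≤ C/(p₀(1 + p̂·ω))` and `|H_S^B(ω,p)_{ij}| ≤ C/(p₀(1 + p̂·ω))`. -/
theorem stmt3 :
    ∃ C : ℝ, 0 < C ∧ ∀ (p ω : E3), ‖ω‖ = 1 → ∀ i j : Fin 3,
      |HSE ω p i j| ≤ C / (p0 p * (1 + ⟪phat p, ω⟫)) ∧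
      |HSB ω p i j| ≤ C / (p0 p * (1 + ⟪phat p, ω⟫)) := by
  refine ⟨6, by norm_num, fun p ω hω i j => ⟨(abs_HSE_le p hω i j).trans ?_, abs_HSB_le p hω i j⟩⟩
  have hD := mul_pos (p0_pos p) (one_add_inner_phat_pos p hω)
  gcongr
  norm_num
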